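/- arXiv:1803.11090 — 2 statements merged into one kernel-verified Lean document; each statement's English description precedes it below -/
import Mathlib

section
/- If ν has density α x^{-2α-1} exp(−x^{-α}) on (0,∞) (the α-stable law in the Kendall algebra), then G(t) = H(t) = e^{-t^{-α}} and the Kendall renewal function is R(t) = (e^{t^{-α}} − 1 + t^{-α} e^{t^{-α}})/(e^{t^{-α}} − 1)². -/
/-!
Put `u = x ^ (-α)`, so that `ν` has density `α x^{-α-1} e^{-u} u` on `(0, ∞)`. For constants
`p, q` the function `(p u + q) e^{-u}` tends to `0` as `x → 0⁺` and has derivative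
`α x^{-α-1} e^{-u} (p u + q - p)`. On `(0, t]` the integrand `x ^ α` of `H` turns `dν` into such a
derivative with `p = 0, q = 1`, and the integrand `1 - (x / t) ^ α` of `G` into one with
`p = 1, q = 1 - t^{-α}`; both are nonnegative there, so the fundamental theorem of calculus gives
`H t = G t = e^{-t^{-α}}`, and the formula for `R` is algebra.
-/

open MeasureTheory Real Filter Set Topology

section FundThmCalculus

variable {F f : ℝ → ℝ} {a b L : ℝ}

lemma continuousOn_update_Icc_of_hasDerivAt_of_tendsto
    (hderiv : ∀ x ∈ Ioc a b, HasDerivAt F (f x) x) (ha : Tendsto F (𝓝[>] a) (𝓝 L)) :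
    ContinuousOn (Function.update F a L) (Icc a b) := by
  rw [continuousOn_update_iff, Icc_sdiff_left]
  exact ⟨fun x hx => (hderiv x hx).continuousAt.continuousWithinAt,
    fun _ => ha.mono_left (nhdsWithin_mono _ Ioc_subset_Ioi_self)⟩

lemma hasDerivAt_update_of_lt {x : ℝ} (hx : a < x) (hF : HasDerivAt F (f x) x) :
    HasDerivAt (Function.update F a L) (f x) x :=
  hF.congr_of_eventuallyEq <| by
    filter_upwards [Ioi_mem_nhds hx] with y hy using Function.update_of_ne hy.ne' _ _

-- Nonnegativity of `f` is what makes it integrable on `(a, b]`.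
lemma setIntegral_Ioc_eq_sub_of_hasDerivAt_of_tendsto_of_nonneg (hab : a < b)
    (hderiv : ∀ x ∈ Ioc a b, HasDerivAt F (f x) x) (ha : Tendsto F (𝓝[>] a) (𝓝 L))
    (hpos : ∀ x ∈ Ioo a b, 0 ≤ f x) :
    ∫ x in Ioc a b, f x = F b - L := by
  have hcont := continuousOn_update_Icc_of_hasDerivAt_of_tendsto hderiv ha
  have hderiv' : ∀ x ∈ Ioo a b, HasDerivAt (Function.update F a L) (f x) x :=
    fun x hx => hasDerivAt_update_of_lt hx.1 (hderiv x (Ioo_subset_Ioc_self hx))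
  have hint : IntervalIntegrable f volume a b :=
    (intervalIntegrable_iff_integrableOn_Ioc_of_le hab.le).2
      (intervalIntegral.integrableOn_deriv_of_nonneg hcont hderiv' hpos)
  rw [← intervalIntegral.integral_of_le hab.le,
    intervalIntegral.integral_eq_sub_of_hasDerivAt_of_le hab.le hcont hderiv' hint,
    Function.update_of_ne hab.ne', Function.update_self]

end FundThmCalculus

lemma integral_withDensity_ofReal {X : Type*} [MeasurableSpace X] {μ : Measure X} {d : X → ℝ}
    (hd : Measurable d) (hd0 : ∀ x, 0 ≤ d x) (g : X → ℝ) :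
    ∫ x, g x ∂μ.withDensity (fun x => ENNReal.ofReal (d x)) = ∫ x, d x * g x ∂μ := by
  rw [integral_withDensity_eq_integral_toReal_smul hd.ennreal_ofReal
    (ae_of_all _ fun _ => ENNReal.ofReal_lt_top)]
  simp only [ENNReal.toReal_ofReal (hd0 _), smul_eq_mul]

lemma exp_neg_renewal_identity {T : ℝ} (hT : 0 < T) :
    exp (-T) / (1 - exp (-T)) + exp (-T) / (T⁻¹ * (1 - exp (-T)) ^ 2)
      = (exp T - 1 + T * exp T) / (exp T - 1) ^ 2 := by
  have h1 : exp T - 1 ≠ 0 := (sub_pos.2 (one_lt_exp_iff.2 hT)).ne'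
  have h2 : 1 - (exp T)⁻¹ ≠ 0 := by
    rw [sub_ne_zero, ne_comm, inv_ne_one]; exact (one_lt_exp_iff.2 hT).ne'
  rw [exp_neg]
  field_simp

noncomputable def stableDensity (α x : ℝ) : ℝ :=
  if 0 < x then α * x ^ (-(2 * α) - 1) * exp (-(x ^ (-α))) else 0

section StableDensity

variable {α : ℝ}

lemma hasDerivAt_affine_rpow_neg_mul_exp (p q : ℝ) {x : ℝ} (hx : 0 < x) :
    HasDerivAt (fun y => (p * y ^ (-α) + q) * exp (-(y ^ (-α))))
      (α * x ^ (-α - 1) * exp (-(x ^ (-α))) * (p * x ^ (-α) + q - p)) x := by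
  have hu := Real.hasDerivAt_rpow_const (x := x) (p := -α) (Or.inl hx.ne')
  have he : HasDerivAt (fun y => exp (-(y ^ (-α)))) (exp (-(x ^ (-α))) * -(-α * x ^ (-α - 1))) x :=
    hu.neg.exp
  exact (((hu.const_mul p).add_const q).mul he).congr_deriv (by ring)

lemma tendsto_affine_rpow_neg_mul_exp_nhdsGT_zero (hα : 0 < α) (p q : ℝ) :
    Tendsto (fun x => (p * x ^ (-α) + q) * exp (-(x ^ (-α)))) (𝓝[>] 0) (𝓝 0) := by
  have hexp : Tendsto (fun u : ℝ => exp (-u)) atTop (𝓝 0) :=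
    tendsto_exp_atBot.comp tendsto_neg_atTop_atBot
  have hmul : Tendsto (fun u : ℝ => u * exp (-u)) atTop (𝓝 0) := by
    simpa using tendsto_pow_mul_exp_neg_atTop_nhds_zero 1
  have := ((hmul.const_mul p).add (hexp.const_mul q)).comp
    (tendsto_rpow_neg_nhdsGT_zero (neg_lt_zero.2 hα))
  simpa [Function.comp_def, add_mul, mul_assoc] using this

lemma setIntegral_Ioc_zero_frechetDensity_mul_affine (hα : 0 < α) {p q t : ℝ}
    (ht : 0 < t) (hpos : ∀ x ∈ Ioo 0 t, 0 ≤ p * x ^ (-α) + q - p) :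
    ∫ x in Ioc 0 t, α * x ^ (-α - 1) * exp (-(x ^ (-α))) * (p * x ^ (-α) + q - p)
      = (p * t ^ (-α) + q) * exp (-(t ^ (-α))) := by
  rw [setIntegral_Ioc_eq_sub_of_hasDerivAt_of_tendsto_of_nonneg ht
    (fun x hx => hasDerivAt_affine_rpow_neg_mul_exp p q hx.1)
    (tendsto_affine_rpow_neg_mul_exp_nhdsGT_zero hα p q), sub_zero]
  intro x hx
  exact mul_nonneg (mul_nonneg (mul_nonneg hα.le (rpow_nonneg hx.1.le _)) (exp_pos _).le)
    (hpos x hx)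

lemma measurable_stableDensity : Measurable (stableDensity α) :=
  Measurable.ite measurableSet_Ioi (by fun_prop) measurable_const

lemma stableDensity_of_pos {x : ℝ} (hx : 0 < x) :
    stableDensity α x = α * x ^ (-α - 1) * exp (-(x ^ (-α))) * x ^ (-α) := by
  have hsplit : x ^ (-(2 * α) - 1) = x ^ (-α - 1) * x ^ (-α) := by
    rw [← rpow_add hx]; ring_nf
  rw [stableDensity, if_pos hx, hsplit]
  ring

lemma stableDensity_of_nonpos {x : ℝ} (hx : x ≤ 0) : stableDensity α x = 0 :=
  if_neg hx.not_gt

lemma stableDensity_nonneg (hα : 0 ≤ α) (x : ℝ) : 0 ≤ stableDensity α x := by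
  rcases le_or_gt x 0 with hx | hx
  · rw [stableDensity_of_nonpos hx]
  · rw [stableDensity_of_pos hx]
    have := rpow_pos_of_pos hx
    positivity

lemma setIntegral_Ioc_zero_stableDensity_mul_rpow (hα : 0 < α) {t : ℝ} (ht : 0 < t) :
    ∫ x in Ioc 0 t, stableDensity α x * x ^ α = exp (-(t ^ (-α))) := by
  have key := setIntegral_Ioc_zero_frechetDensity_mul_affine hα (p := 0) (q := 1) ht
    (fun _ _ => by norm_num)
  simp only [zero_mul, zero_add, sub_zero, mul_one, one_mul] at key
  rw [← key]
  refine setIntegral_congr_fun measurableSet_Ioc fun x hx => ?_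
  rw [stableDensity_of_pos hx.1, mul_assoc, ← rpow_add hx.1, neg_add_cancel, rpow_zero, mul_one]

lemma integral_stableDensity_mul_max_one_sub_div (hα : 0 < α) {t : ℝ} (ht : 0 < t) :
    ∫ x, stableDensity α x * max (1 - x ^ α / t ^ α) 0 = exp (-(t ^ (-α))) := by
  have key := setIntegral_Ioc_zero_frechetDensity_mul_affine hα (p := 1)
    (q := 1 - t ^ (-α)) ht fun x hx => by
      have := rpow_le_rpow_of_nonpos hx.1 hx.2.le (neg_nonpos.2 hα.le)
      linarith
  rw [show (1 * t ^ (-α) + (1 - t ^ (-α))) = 1 by ring, one_mul] at key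
  rw [← key, ← setIntegral_eq_integral_of_forall_compl_eq_zero (s := Ioc 0 t)]
  · refine setIntegral_congr_fun measurableSet_Ioc fun x hx => ?_
    have hxt : x ^ α ≤ t ^ α := rpow_le_rpow hx.1.le hx.2 hα.le
    have htα : 0 < t ^ α := rpow_pos_of_pos ht α
    have hxα : 0 < x ^ α := rpow_pos_of_pos hx.1 α
    rw [stableDensity_of_pos hx.1, max_eq_left (by rw [sub_nonneg, div_le_one htα]; exact hxt),
      rpow_neg hx.1.le, rpow_neg ht.le]
    field_simp
    ring
  · intro x hx
    rcases le_or_gt x 0 with hx0 | hx0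
    · rw [stableDensity_of_nonpos hx0, zero_mul]
    · have htx : t < x := lt_of_not_ge fun h => hx ⟨hx0, h⟩
      have htx' : t ^ α ≤ x ^ α := rpow_le_rpow ht.le htx.le hα.le
      rw [max_eq_right (by rwa [sub_nonpos, one_le_div (rpow_pos_of_pos ht α)]), mul_zero]

end StableDensity

/-- Kendall renewal function for the α-stable unit step distribution in the
Kendall algebra, with density `α x^(-2α-1) exp(-x^(-α))` on `(0,∞)`. -/
theorem kendall_renewal_stable
    (α : ℝ) (hα : 0 < α)
    (ν : Measure ℝ)
    (hν : ν = volume.withDensity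
      (fun x => ENNReal.ofReal
        (if 0 < x then α * x ^ (-(2 * α) - 1) * Real.exp (-(x ^ (-α))) else 0)))
    (G H R : ℝ → ℝ)
    (hG : ∀ t, G t = ∫ x, max (1 - x ^ α / t ^ α) 0 ∂ν)
    (hH : ∀ t, H t = ∫ x in Set.Ioc 0 t, x ^ α ∂ν)
    (hR : ∀ t, R t = G t / (1 - G t) + H t / (t ^ α * (1 - G t) ^ 2)) :
    ∀ t : ℝ, 0 < t →
      G t = Real.exp (-(t ^ (-α))) ∧
      H t = Real.exp (-(t ^ (-α))) ∧
      R t = (Real.exp (t ^ (-α)) - 1 + t ^ (-α) * Real.exp (t ^ (-α))) /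
            (Real.exp (t ^ (-α)) - 1) ^ 2 := by
  intro t ht
  have hν' : ν = volume.withDensity fun x => ENNReal.ofReal (stableDensity α x) := hν
  have hρ := stableDensity_nonneg hα.le
  have hGt : G t = exp (-(t ^ (-α))) := by
    rw [hG, hν', integral_withDensity_ofReal measurable_stableDensity hρ,
      integral_stableDensity_mul_max_one_sub_div hα ht]
  have hHt : H t = exp (-(t ^ (-α))) := by
    rw [hH, hν', restrict_withDensity measurableSet_Ioc,
      integral_withDensity_ofReal measurable_stableDensity hρ,
      setIntegral_Ioc_zero_stableDensity_mul_rpow hα ht]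
  refine ⟨hGt, hHt, ?_⟩
  rw [hR, hGt, hHt, ← inv_inv (t ^ α), ← rpow_neg ht.le]
  exact exp_neg_renewal_identity (rpow_pos_of_pos ht _)
end

section
/- With F, H, α as above and Ḡ(x) = 1 − F(x) + x^{-α} H(x), if H ∈ RV_θ with 0 ≤ θ < α, then x^α Ḡ(x)/H(x) → α/(α − θ) as x → ∞. -/
/-!
With `T x = ν (x, ∞)` and `r x = x ^ α T x / H x` one has `x ^ α Ḡ x / H x = r x + 1`. On `(x, l x]`
the measure `ν` carries `H`-mass between `x ^ α` and `(l x) ^ α` times its `ν`-mass, whence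
`r x ≤ l ^ (-α) (H (l x) / H x) r (l x) + H (l x) / H x - 1` and a matching lower bound.
Comparing `H` on dyadic blocks, where it grows by a factor below `2 ^ α`, shows that `r` is bounded.
Passing to `limsup` and `liminf` with `H (l x) / H x → l ^ θ` then gives
`limsup r ≤ (l ^ θ - 1) / (1 - l ^ (θ - α)) ≤ l ^ α liminf r`, and both bounds tend to `θ / (α - θ)`
as `l ↓ 1`.
-/

open MeasureTheory Real Filter Set Topology

section LimsupRecursion

variable {ι : Type*} {l : Filter ι} [l.NeBot] {r a b : ι → ℝ} {φ : ι → ι} {A B : ℝ}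

lemma limsup_le_mul_add_of_le_mul_comp_add (hφ : Tendsto φ l l)
    (ha : Tendsto a l (𝓝 A)) (hb : Tendsto b l (𝓝 B)) (ha0 : ∀ᶠ x in l, 0 ≤ a x)
    (hr : IsBoundedUnder (· ≤ ·) l r) (hr' : IsBoundedUnder (· ≥ ·) l r)
    (h : ∀ᶠ x in l, r x ≤ a x * r (φ x) + b x) :
    limsup r l ≤ A * limsup r l + B := by
  set u := limsup r l
  have hε : ∀ ε > 0, u ≤ A * (u + ε) + B := by
    intro ε hε
    have hrφ : ∀ᶠ x in l, r (φ x) ≤ u + ε :=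
      (hφ.eventually (eventually_lt_of_limsup_lt (lt_add_of_pos_right u hε) hr)).mono
        fun _ => le_of_lt
    have hlim : Tendsto (fun x => a x * (u + ε) + b x) l (𝓝 (A * (u + ε) + B)) :=
      (ha.mul_const _).add hb
    rw [← hlim.limsup_eq]
    refine limsup_le_limsup ?_ hr'.isCoboundedUnder_le hlim.isBoundedUnder_le
    filter_upwards [h, hrφ, ha0] with x hx hxφ hax
    exact hx.trans (by gcongr)
  have hcont : Tendsto (fun ε => A * (u + ε) + B) (𝓝[>] 0) (𝓝 (A * u + B)) := by
    have := ((continuous_const.mul (continuous_const.add continuous_id)).add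
      continuous_const).tendsto' (0 : ℝ) (A * u + B) (by simp) (f := fun ε => A * (u + ε) + B)
    exact this.mono_left nhdsWithin_le_nhds
  exact ge_of_tendsto hcont (eventually_nhdsWithin_of_forall hε)

lemma mul_add_le_liminf_of_mul_comp_add_le (hφ : Tendsto φ l l)
    (ha : Tendsto a l (𝓝 A)) (hb : Tendsto b l (𝓝 B)) (ha0 : ∀ᶠ x in l, 0 ≤ a x)
    (hr : IsBoundedUnder (· ≤ ·) l r) (hr' : IsBoundedUnder (· ≥ ·) l r)
    (h : ∀ᶠ x in l, a x * r (φ x) + b x ≤ r x) :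
    A * liminf r l + B ≤ liminf r l := by
  set v := liminf r l
  have hε : ∀ ε > 0, A * (v - ε) + B ≤ v := by
    intro ε hε
    have hrφ : ∀ᶠ x in l, v - ε ≤ r (φ x) :=
      (hφ.eventually (eventually_lt_of_lt_liminf (sub_lt_self v hε) hr')).mono
        fun _ => le_of_lt
    have hlim : Tendsto (fun x => a x * (v - ε) + b x) l (𝓝 (A * (v - ε) + B)) :=
      (ha.mul_const _).add hb
    rw [← hlim.liminf_eq]
    refine liminf_le_liminf ?_ hlim.isBoundedUnder_ge hr.isCoboundedUnder_ge
    filter_upwards [h, hrφ, ha0] with x hx hxφ hax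
    exact (by gcongr : a x * (v - ε) + b x ≤ a x * r (φ x) + b x).trans hx
  have hcont : Tendsto (fun ε => A * (v - ε) + B) (𝓝[>] 0) (𝓝 (A * v + B)) := by
    have := ((continuous_const.mul (continuous_const.sub continuous_id)).add
      continuous_const).tendsto' (0 : ℝ) (A * v + B) (by simp) (f := fun ε => A * (v - ε) + B)
    exact this.mono_left nhdsWithin_le_nhds
  exact le_of_tendsto hcont (eventually_nhdsWithin_of_forall hε)

end LimsupRecursion

lemma tendsto_rpow_sub_one_div_sub_one (p : ℝ) :
    Tendsto (fun l : ℝ => (l ^ p - 1) / (l - 1)) (𝓝[≠] 1) (𝓝 p) := by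
  have hd : HasDerivAt (fun y : ℝ => y ^ p) p 1 := by
    simpa using hasDerivAt_rpow_const (x := 1) (p := p) (Or.inl one_ne_zero)
  exact (hasDerivAt_iff_tendsto_slope.1 hd).congr fun l => by rw [slope_def_field, one_rpow]

lemma tendsto_rpow_sub_one_div_one_sub_rpow {α θ : ℝ} (hθα : θ ≠ α) :
    Tendsto (fun l : ℝ => (l ^ θ - 1) / (1 - l ^ (θ - α))) (𝓝[≠] 1) (𝓝 (θ / (α - θ))) := by
  have h := (tendsto_rpow_sub_one_div_sub_one θ).div (tendsto_rpow_sub_one_div_sub_one (θ - α)).neg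
    (neg_ne_zero.2 (sub_ne_zero.2 hθα))
  rw [neg_sub] at h
  refine h.congr' (eventually_nhdsWithin_of_forall fun l (hl : l ≠ 1) => ?_)
  rw [Pi.div_apply, ← neg_div, div_div_div_cancel_right₀ (sub_ne_zero.2 hl), neg_sub]

def IsRegularlyVarying (H : ℝ → ℝ) (θ : ℝ) : Prop :=
  ∀ l : ℝ, 0 < l → Tendsto (fun t => H (t * l) / H t) atTop (𝓝 (l ^ θ))

/-- The properties of `H t = ∫_{(0,t]} y ^ α dν` and `T t = ν (t, ∞)` that the asymptotics rest on;
the increment bounds are a discrete form of `dH(y) = -y ^ α dT(y)`. -/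
structure IsMomentTailPair (α : ℝ) (H T : ℝ → ℝ) : Prop where
  increment_bounds : ∀ ⦃a b : ℝ⦄, 0 < a → a ≤ b →
    a ^ α * (T a - T b) ≤ H b - H a ∧ H b - H a ≤ b ^ α * (T a - T b)
  moment_nonneg : ∀ x, 0 ≤ H x
  tail_nonneg : ∀ x, 0 ≤ T x
  tendsto_tail : Tendsto T atTop (𝓝 0)

noncomputable def tailRatio (α : ℝ) (H T : ℝ → ℝ) (x : ℝ) : ℝ := x ^ α * T x / H x

section Karamata

variable {α θ : ℝ} {H T : ℝ → ℝ}

lemma IsRegularlyVarying.eventually_pos (hRV : IsRegularlyVarying H θ)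
    (hH : ∀ x, 0 ≤ H x) : ∀ᶠ x in atTop, 0 < H x := by
  filter_upwards [(hRV 2 two_pos).eventually_const_lt (rpow_pos_of_pos two_pos θ)] with x hx
  refine (hH x).lt_of_ne' fun h => ?_
  simp [h] at hx

lemma rpow_neg_mul_div_mul_tailRatio_mul {x l : ℝ} (hx : 0 ≤ x) (hl : 0 < l)
    (hHxl : H (x * l) ≠ 0) :
    l ^ (-α) * (H (x * l) / H x) * tailRatio α H T (x * l) = x ^ α * T (x * l) / H x := by
  rw [tailRatio, mul_rpow hx hl.le, rpow_neg hl.le]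
  field_simp

namespace IsMomentTailPair

lemma exists_rpow_mul_le_mul_of_doubling (hp : IsMomentTailPair α H T) {K : ℝ} (hK0 : 0 ≤ K)
    (hKα : K < 2 ^ α) (hK : ∀ᶠ x in atTop, H (x * 2) ≤ K * H x) :
    ∃ C, ∀ᶠ x in atTop, x ^ α * T x ≤ C * H x := by
  obtain ⟨X, hX⟩ := (hK.and (eventually_gt_atTop 0)).exists_forall_of_atTop
  have h2α : (0 : ℝ) < 2 ^ α := rpow_pos_of_pos two_pos α
  have hgap : 0 < 2 ^ α - K := by linarith
  set C := K * 2 ^ α / (2 ^ α - K)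
  have hC : 0 ≤ C := by positivity
  -- induction on the number of dyadic blocks `(x 2ᵏ, x 2ᵏ⁺¹]`, each costing a factor `K / 2 ^ α`
  have htrunc : ∀ N : ℕ, ∀ x, X ≤ x → x ^ α * (T x - T (x * 2 ^ N)) ≤ C * H x := by
    intro N
    induction N with
    | zero => intro x _; simpa using mul_nonneg hC (hp.moment_nonneg x)
    | succ N ih =>
      intro x hx
      obtain ⟨hx2, hx0⟩ := hX x hx
      have hscale : x ^ α = (x * 2) ^ α / 2 ^ α := by
        rw [mul_rpow hx0.le zero_le_two]; field_simp
      have hblock := (hp.increment_bounds hx0 (by linarith : x ≤ x * 2)).1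
      have hHx := hp.moment_nonneg x
      calc x ^ α * (T x - T (x * 2 ^ (N + 1)))
          = x ^ α * (T x - T (x * 2)) + (x * 2) ^ α * (T (x * 2) - T (x * 2 * 2 ^ N)) / 2 ^ α := by
            rw [pow_succ', ← mul_assoc, hscale]; ring
        _ ≤ (H (x * 2) - H x) + C * H (x * 2) / 2 ^ α :=
            add_le_add hblock (div_le_div_of_nonneg_right (ih (x * 2) (by linarith)) h2α.le)
        _ ≤ K * H x + C * (K * H x) / 2 ^ α := by gcongr; linarith
        _ = C * H x := by
            simp only [C]; field_simp; ring
  refine ⟨C, eventually_atTop.2 ⟨X, fun x hx => ?_⟩⟩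
  have hx0 := (hX x hx).2
  have hlim : Tendsto (fun N : ℕ => x ^ α * (T x - T (x * 2 ^ N))) atTop
      (𝓝 (x ^ α * (T x - 0))) :=
    ((hp.tendsto_tail.comp ((tendsto_pow_atTop_atTop_of_one_lt one_lt_two).const_mul_atTop
      hx0)).const_sub _).const_mul _
  simpa using le_of_tendsto' hlim fun N => htrunc N x hx

lemma eventually_tailRatio_nonneg (hp : IsMomentTailPair α H T) :
    ∀ᶠ x in atTop, 0 ≤ tailRatio α H T x := by
  filter_upwards [eventually_ge_atTop 0] with x hx
  exact div_nonneg (mul_nonneg (rpow_nonneg hx α) (hp.tail_nonneg x)) (hp.moment_nonneg x)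

lemma isBoundedUnder_le_tailRatio (hp : IsMomentTailPair α H T) (hRV : IsRegularlyVarying H θ)
    (hθα : θ < α) : IsBoundedUnder (· ≤ ·) atTop (tailRatio α H T) := by
  have h2 : (2 : ℝ) ^ θ < 2 ^ α := rpow_lt_rpow_of_exponent_lt one_lt_two hθα
  have hK : ∀ᶠ x in atTop, H (x * 2) ≤ (2 ^ θ + 2 ^ α) / 2 * H x := by
    filter_upwards [(hRV 2 two_pos).eventually_lt_const
        (by linarith : (2 : ℝ) ^ θ < (2 ^ θ + 2 ^ α) / 2),
      hRV.eventually_pos hp.moment_nonneg] with x hratio hHx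
    exact ((div_lt_iff₀ hHx).1 hratio).le
  obtain ⟨C, hC⟩ := hp.exists_rpow_mul_le_mul_of_doubling (by positivity) (by linarith) hK
  refine isBoundedUnder_of_eventually_le (a := C) ?_
  filter_upwards [hC, hRV.eventually_pos hp.moment_nonneg] with x hx hHx
  exact (div_le_iff₀ hHx).2 hx

lemma tailRatio_le (hp : IsMomentTailPair α H T) {x l : ℝ} (hx : 0 < x) (hl : 1 ≤ l)
    (hHx : 0 < H x) (hHxl : H (x * l) ≠ 0) :
    tailRatio α H T x ≤
      l ^ (-α) * (H (x * l) / H x) * tailRatio α H T (x * l) + (H (x * l) / H x - 1) := by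
  have hstep := (hp.increment_bounds hx (le_mul_of_one_le_right hx.le hl)).1
  rw [rpow_neg_mul_div_mul_tailRatio_mul hx.le (by linarith) hHxl, tailRatio,
    div_sub_one hHx.ne', ← add_div]
  gcongr
  linarith

lemma le_tailRatio (hp : IsMomentTailPair α H T) {x l : ℝ} (hx : 0 < x) (hl : 1 ≤ l)
    (hHx : 0 < H x) (hHxl : H (x * l) ≠ 0) :
    l ^ (-α) * (H (x * l) / H x) * tailRatio α H T (x * l) + l ^ (-α) * (H (x * l) / H x - 1) ≤
      tailRatio α H T x := by
  have hl0 : 0 < l := by linarith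
  have hstep := (hp.increment_bounds hx (le_mul_of_one_le_right hx.le hl)).2
  have hscale : l ^ (-α) * (x * l) ^ α = x ^ α := by
    rw [mul_rpow hx.le hl0.le, rpow_neg hl0.le]; field_simp
  rw [rpow_neg_mul_div_mul_tailRatio_mul hx.le hl0 hHxl, tailRatio, div_sub_one hHx.ne',
    mul_div_assoc', ← add_div]
  gcongr
  calc x ^ α * T (x * l) + l ^ (-α) * (H (x * l) - H x)
      ≤ x ^ α * T (x * l) + l ^ (-α) * ((x * l) ^ α * (T x - T (x * l))) := by gcongr
    _ = x ^ α * T x := by rw [← mul_assoc, hscale]; ring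

lemma limsup_tailRatio_le (hp : IsMomentTailPair α H T) (hRV : IsRegularlyVarying H θ)
    (hθα : θ < α) {l : ℝ} (hl : 1 < l) :
    limsup (tailRatio α H T) atTop ≤ (l ^ θ - 1) / (1 - l ^ (θ - α)) := by
  have hl0 : 0 < l := by linarith
  have hA : l ^ (-α) * l ^ θ = l ^ (θ - α) := by rw [← rpow_add hl0]; ring_nf
  have hA1 : l ^ (θ - α) < 1 := rpow_lt_one_of_one_lt_of_neg hl (by linarith)
  have hφ : Tendsto (fun x => x * l) atTop atTop := tendsto_id.atTop_mul_const hl0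
  have hpos := hRV.eventually_pos hp.moment_nonneg
  have hrec := limsup_le_mul_add_of_le_mul_comp_add hφ ((hRV l hl0).const_mul (l ^ (-α)))
    ((hRV l hl0).sub_const 1)
    (Eventually.of_forall fun x =>
      mul_nonneg (rpow_nonneg hl0.le _) (div_nonneg (hp.moment_nonneg _) (hp.moment_nonneg _)))
    (hp.isBoundedUnder_le_tailRatio hRV hθα)
    (isBoundedUnder_of_eventually_ge hp.eventually_tailRatio_nonneg)
    (by filter_upwards [eventually_gt_atTop 0, hpos, hφ.eventually hpos] with x hx hHx hHxl
        exact hp.tailRatio_le hx hl.le hHx hHxl.ne')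
  rw [hA] at hrec
  rw [le_div_iff₀ (sub_pos.2 hA1)]
  linarith

lemma le_liminf_tailRatio (hp : IsMomentTailPair α H T) (hRV : IsRegularlyVarying H θ)
    (hθα : θ < α) {l : ℝ} (hl : 1 < l) :
    l ^ (-α) * ((l ^ θ - 1) / (1 - l ^ (θ - α))) ≤ liminf (tailRatio α H T) atTop := by
  have hl0 : 0 < l := by linarith
  have hA : l ^ (-α) * l ^ θ = l ^ (θ - α) := by rw [← rpow_add hl0]; ring_nf
  have hA1 : l ^ (θ - α) < 1 := rpow_lt_one_of_one_lt_of_neg hl (by linarith)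
  have hφ : Tendsto (fun x => x * l) atTop atTop := tendsto_id.atTop_mul_const hl0
  have hpos := hRV.eventually_pos hp.moment_nonneg
  have hrec := mul_add_le_liminf_of_mul_comp_add_le hφ ((hRV l hl0).const_mul (l ^ (-α)))
    (((hRV l hl0).sub_const 1).const_mul (l ^ (-α)))
    (Eventually.of_forall fun x =>
      mul_nonneg (rpow_nonneg hl0.le _) (div_nonneg (hp.moment_nonneg _) (hp.moment_nonneg _)))
    (hp.isBoundedUnder_le_tailRatio hRV hθα)
    (isBoundedUnder_of_eventually_ge hp.eventually_tailRatio_nonneg)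
    (by filter_upwards [eventually_gt_atTop 0, hpos, hφ.eventually hpos] with x hx hHx hHxl
        exact hp.le_tailRatio hx hl.le hHx hHxl.ne')
  rw [hA] at hrec
  rw [mul_div_assoc', div_le_iff₀ (sub_pos.2 hA1)]
  linarith

/-- Karamata's theorem for the pair `(H, T)`. -/
theorem tendsto_tailRatio (hp : IsMomentTailPair α H T) (hRV : IsRegularlyVarying H θ)
    (hθα : θ < α) : Tendsto (tailRatio α H T) atTop (𝓝 (θ / (α - θ))) := by
  have hg : Tendsto (fun l : ℝ => (l ^ θ - 1) / (1 - l ^ (θ - α))) (𝓝[>] 1) (𝓝 (θ / (α - θ))) :=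
    (tendsto_rpow_sub_one_div_one_sub_rpow hθα.ne).mono_left
      (nhdsWithin_mono 1 fun l (hl : l ∈ Ioi 1) => ne_of_gt hl)
  have hpow : Tendsto (fun l : ℝ => l ^ (-α)) (𝓝[>] 1) (𝓝 1) := by
    simpa using ((continuousAt_rpow_const 1 (-α) (Or.inl one_ne_zero)).tendsto).mono_left
      nhdsWithin_le_nhds
  refine tendsto_of_le_liminf_of_limsup_le ?_ ?_ (hp.isBoundedUnder_le_tailRatio hRV hθα)
    (isBoundedUnder_of_eventually_ge hp.eventually_tailRatio_nonneg)
  · have hlow := hpow.mul hg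
    rw [one_mul] at hlow
    exact le_of_tendsto hlow
      (eventually_nhdsWithin_of_forall fun l (hl : l ∈ Ioi 1) => hp.le_liminf_tailRatio hRV hθα hl)
  · exact ge_of_tendsto hg
      (eventually_nhdsWithin_of_forall fun l (hl : l ∈ Ioi 1) => hp.limsup_tailRatio_le hRV hθα hl)

end IsMomentTailPair

end Karamata

section TruncatedMoment

variable {ν : Measure ℝ} [IsFiniteMeasure ν] {α a b : ℝ}

lemma integrableOn_rpow_Ioc (hα : 0 ≤ α) (t : ℝ) :
    IntegrableOn (fun y : ℝ => y ^ α) (Ioc 0 t) ν := by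
  refine Measure.integrableOn_of_bounded (M := |t| ^ α) (measure_ne_top ν _)
    (continuous_rpow_const hα).measurable.aestronglyMeasurable ?_
  filter_upwards [ae_restrict_mem measurableSet_Ioc] with y hy
  rw [norm_of_nonneg (rpow_nonneg hy.1.le _)]
  exact rpow_le_rpow hy.1.le (hy.2.trans (le_abs_self t)) hα

lemma setIntegral_rpow_Ioc_sub (hα : 0 ≤ α) (ha : 0 ≤ a) (hab : a ≤ b) :
    ∫ y in Ioc 0 b, y ^ α ∂ν - ∫ y in Ioc 0 a, y ^ α ∂ν = ∫ y in Ioc a b, y ^ α ∂ν := by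
  rw [sub_eq_iff_eq_add', ← setIntegral_union (Ioc_disjoint_Ioc_of_le le_rfl) measurableSet_Ioc
    ((integrableOn_rpow_Ioc hα b).mono_set (Ioc_subset_Ioc_right hab))
    ((integrableOn_rpow_Ioc hα b).mono_set (Ioc_subset_Ioc_left ha)), Ioc_union_Ioc_eq_Ioc ha hab]

lemma rpow_mul_measureReal_le_setIntegral_rpow (hα : 0 ≤ α) (ha : 0 < a) :
    a ^ α * ν.real (Ioc a b) ≤ ∫ y in Ioc a b, y ^ α ∂ν := by
  rw [mul_comm, ← smul_eq_mul, ← setIntegral_const]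
  exact setIntegral_mono_on (integrableOn_const (measure_ne_top ν _))
    ((integrableOn_rpow_Ioc hα b).mono_set (Ioc_subset_Ioc_left ha.le)) measurableSet_Ioc
    fun y hy => rpow_le_rpow ha.le hy.1.le hα

lemma setIntegral_rpow_le_rpow_mul_measureReal (hα : 0 ≤ α) (ha : 0 < a) :
    ∫ y in Ioc a b, y ^ α ∂ν ≤ b ^ α * ν.real (Ioc a b) := by
  rw [mul_comm, ← smul_eq_mul, ← setIntegral_const]
  exact setIntegral_mono_on ((integrableOn_rpow_Ioc hα b).mono_set (Ioc_subset_Ioc_left ha.le))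
    (integrableOn_const (measure_ne_top ν _)) measurableSet_Ioc
    fun y hy => rpow_le_rpow (ha.trans hy.1).le hy.2 hα

lemma measureReal_Ioi_sub_measureReal_Ioi (hab : a ≤ b) :
    ν.real (Ioi a) - ν.real (Ioi b) = ν.real (Ioc a b) := by
  rw [sub_eq_iff_eq_add, ← measureReal_union Ioc_disjoint_Ioi_same measurableSet_Ioi,
    Ioc_union_Ioi_eq_Ioi hab]

lemma tendsto_measureReal_Ioi_atTop : Tendsto (fun x => ν.real (Ioi x)) atTop (𝓝 0) := by
  have hIic : Tendsto (fun x => ν.real (Iic x)) atTop (𝓝 (ν.real univ)) :=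
    (ENNReal.tendsto_toReal (measure_ne_top ν univ)).comp (tendsto_measure_Iic_atTop ν)
  simpa [← compl_Iic, measureReal_compl measurableSet_Iic] using
    (tendsto_const_nhds (x := ν.real univ)).sub hIic

lemma isMomentTailPair_setIntegral_rpow_measureReal_Ioi (hα : 0 ≤ α) :
    IsMomentTailPair α (fun t => ∫ y in Ioc 0 t, y ^ α ∂ν) (fun t => ν.real (Ioi t)) where
  increment_bounds a b ha hab := by
    simp only [setIntegral_rpow_Ioc_sub hα ha.le hab, measureReal_Ioi_sub_measureReal_Ioi hab]
    exact ⟨rpow_mul_measureReal_le_setIntegral_rpow hα ha,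
      setIntegral_rpow_le_rpow_mul_measureReal hα ha⟩
  moment_nonneg t := setIntegral_nonneg measurableSet_Ioc fun y hy => rpow_nonneg hy.1.le _
  tail_nonneg t := measureReal_nonneg
  tendsto_tail := tendsto_measureReal_Ioi_atTop

end TruncatedMoment

theorem Gbar_ratio_limit_of_RV_general
    (α θ : ℝ) (hα : 0 < α) (hθα : θ < α)
    (ν : Measure ℝ) [IsProbabilityMeasure ν]
    (F H G : ℝ → ℝ)
    (hF : ∀ t, F t = (ν (Set.Iic t)).toReal)
    (hH : ∀ t, H t = ∫ x in Set.Ioc 0 t, x ^ α ∂ν)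
    (hG : ∀ t, G t = F t - t ^ (-α) * H t)
    (hRV : ∀ x : ℝ, 0 < x →
      Tendsto (fun t => H (t * x) / H t) atTop (nhds (x ^ θ))) :
    Tendsto (fun x => x ^ α * (1 - G x) / H x) atTop (nhds (α / (α - θ))) := by
  have hp : IsMomentTailPair α H fun t => ν.real (Ioi t) := by
    rw [funext hH]; exact isMomentTailPair_setIntegral_rpow_measureReal_Ioi hα.le
  have hlim := (hp.tendsto_tailRatio hRV hθα).add_const 1
  rw [div_add_one (sub_ne_zero.2 hθα.ne'), add_sub_cancel] at hlim
  refine hlim.congr' ?_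
  filter_upwards [eventually_gt_atTop 0,
    IsRegularlyVarying.eventually_pos hRV hp.moment_nonneg] with x hx hHx
  have hFx : 1 - F x = ν.real (Ioi x) := by
    rw [hF, ← compl_Iic, probReal_compl_eq_one_sub measurableSet_Iic, measureReal_def]
  have hGx : 1 - G x = ν.real (Ioi x) + x ^ (-α) * H x := by rw [hG]; linarith
  rw [tailRatio, hGx, rpow_neg hx.le]
  field_simp

/-- If `H ∈ RV_θ` with `θ ∈ [0, α)`, then `x^α Ḡ(x)/H(x) → α/(α - θ)`,
where `Ḡ(x) = 1 - G(x)` and `G(x) = F(x) - x^(-α) H(x)`. -/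
theorem Gbar_ratio_limit_of_RV
    (α θ : ℝ) (hα : 0 < α) (hθ0 : 0 ≤ θ) (hθα : θ < α)
    (ν : Measure ℝ) [IsProbabilityMeasure ν] (hν : ν (Set.Iic 0) = 0)
    (F H G : ℝ → ℝ)
    (hF : ∀ t, F t = (ν (Set.Iic t)).toReal)
    (hH : ∀ t, H t = ∫ x in Set.Ioc 0 t, x ^ α ∂ν)
    (hG : ∀ t, G t = F t - t ^ (-α) * H t)
    (hRV : ∀ x : ℝ, 0 < x →
      Tendsto (fun t => H (t * x) / H t) atTop (nhds (x ^ θ))) :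
    Tendsto (fun x => x ^ α * (1 - G x) / H x) atTop (nhds (α / (α - θ))) :=
  Gbar_ratio_limit_of_RV_general α θ hα hθα ν F H G hF hH hG hRV
end
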